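/- arXiv:1910.12131 — 9 statements merged into one kernel-verified Lean document; each statement's English description precedes it below -/
import Mathlib

section
/- Let u, w : 𝒜 × ℝ → ℝ be two quasi-linear utility functions. Then the following three statements are equivalent: (1) u and w represent the same preference on 𝒜 × ℝ (i.e., for all a, b ∈ 𝒜 and z_a, z_b ∈ ℝ, u(a, z_a) ≥ u(b, z_b) ⇔ w(a, z_a) ≥ w(b, z_b)); (2) there exists a constant C ∈ ℝ such that u(a, 0) = w(a, 0) + C for every alternative a ∈ 𝒜; (3) there exists a constant C ∈ ℝ such that u(a, z) = w(a, z) + C for every alternative a ∈ 𝒜 and every z ∈ ℝ. -/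
/-- A utility function `u : 𝒜 × ℝ → ℝ` is quasi-linear if `u (a, z) = v a - z`
for some valuation `v : 𝒜 → ℝ`. -/
def QuasiLinear {𝒜 : Type*} (u : 𝒜 × ℝ → ℝ) : Prop :=
  ∃ v : 𝒜 → ℝ, ∀ (a : 𝒜) (z : ℝ), u (a, z) = v a - z

theorem stmt0 {𝒜 : Type*} [Fintype 𝒜] [Nonempty 𝒜] (u w : 𝒜 × ℝ → ℝ)
    (hu : QuasiLinear u) (hw : QuasiLinear w) :
    List.TFAE [
      -- (1) `u` and `w` represent the same preference
      (∀ (a b : 𝒜) (za zb : ℝ), u (b, zb) ≤ u (a, za) ↔ w (b, zb) ≤ w (a, za)),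
      -- (2) they differ by a constant at payment 0
      (∃ C : ℝ, ∀ a : 𝒜, u (a, 0) = w (a, 0) + C),
      -- (3) they differ by a constant everywhere
      (∃ C : ℝ, ∀ (a : 𝒜) (z : ℝ), u (a, z) = w (a, z) + C)] := by
  obtain ⟨v, hv⟩ := hu
  obtain ⟨v', hv'⟩ := hw
  tfae_have 1 → 2 := by
    intro h
    obtain ⟨a₀⟩ := ‹Nonempty 𝒜›
    refine ⟨u (a₀, 0) - w (a₀, 0), fun a => ?_⟩
    have h1 := (h a a₀ (v a - v a₀) 0).mp (by rw [hv, hv]; linarith)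
    have h2 := (h a a₀ (v' a - v' a₀) 0).mpr (by rw [hv', hv']; linarith)
    simp only [hv, hv'] at h1 h2 ⊢
    linarith
  tfae_have 2 → 3 := by
    rintro ⟨C, hC⟩
    refine ⟨C, fun a z => ?_⟩
    have h := hC a
    simp only [hv, hv'] at h ⊢
    linarith
  tfae_have 3 → 1 := by
    rintro ⟨C, hC⟩ a b za zb
    rw [hC, hC]
    constructor <;> intro <;> linarith
  tfae_finish
end

section
/- Let u, w : 𝒜 × ℝ → ℝ be two quasi-linear utility functions. If both u and w pos-represent the same preference ≽, then there exists a constant C ∈ ℝ such that w(a, z) = u(a, z) + C for all a ∈ 𝒜 and z ∈ ℝ. -/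
/-- `u` pos-represents the preference `R` on `𝒜 × ℝ`. -/
def PosRepresents {𝒜 : Type*} (u : 𝒜 × ℝ → ℝ) (R : 𝒜 × ℝ → 𝒜 × ℝ → Prop) : Prop :=
  ∀ (a b : 𝒜) (za zb : ℝ), (0 ≤ u (a, za) ∨ 0 ≤ u (b, zb)) →
    (R (a, za) (b, zb) ↔ u (b, zb) ≤ u (a, za))

theorem stmt2 {𝒜 : Type*} [Fintype 𝒜] [Nonempty 𝒜] (u w : 𝒜 × ℝ → ℝ)
    (hu : QuasiLinear u) (hw : QuasiLinear w)
    (R : 𝒜 × ℝ → 𝒜 × ℝ → Prop)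
    (hRrefl : Reflexive R) (hRtrans : Transitive R) (hRtotal : Total R)
    (hru : PosRepresents u R) (hrw : PosRepresents w R) :
    ∃ C : ℝ, ∀ (a : 𝒜) (z : ℝ), w (a, z) = u (a, z) + C := by
  obtain ⟨v, hv⟩ := hu
  obtain ⟨x, hx⟩ := hw
  have key : ∀ a b : 𝒜, x a - v a = x b - v b := by
    intro a b
    set t : ℝ := max 0 (max (v a - x a) (v b - x b)) with ht
    have ht0 : (0:ℝ) ≤ t := le_max_left _ _
    have hta : v a - x a ≤ t := le_trans (le_max_left _ _) (le_max_right _ _)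
    have htb : v b - x b ≤ t := le_trans (le_max_right _ _) (le_max_right _ _)
    have hua : u (a, v a - t) = t := by rw [hv]; ring
    have hub : u (b, v b - t) = t := by rw [hv]; ring
    have hwa : w (a, v a - t) = x a - v a + t := by rw [hx]; ring
    have hwb : w (b, v b - t) = x b - v b + t := by rw [hx]; ring
    have hR1 : R (a, v a - t) (b, v b - t) := by
      rw [hru a b _ _ (Or.inl (by rw [hua]; exact ht0)), hua, hub]
    have hR2 : R (b, v b - t) (a, v a - t) := by
      rw [hru b a _ _ (Or.inl (by rw [hub]; exact ht0)), hua, hub]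
    have hwa0 : 0 ≤ w (a, v a - t) := by rw [hwa]; linarith
    have h1 := (hrw a b _ _ (Or.inl hwa0)).mp hR1
    have h2 := (hrw b a _ _ (Or.inr hwa0)).mp hR2
    rw [hwa, hwb] at h1 h2
    linarith
  obtain ⟨a₀⟩ := ‹Nonempty 𝒜›
  refine ⟨x a₀ - v a₀, fun a z => ?_⟩
  rw [hx, hv]
  have := key a a₀
  linarith
end

section
/- Suppose |𝒜| ≥ 3, and for each agent i there is a bijection φ_i between T_i and the set { u quasi-linear : min_{a ∈ 𝒜} u(a, 0) = 0 } such that for every type t ∈ T_i, φ_i(t) pos-represents t. Let (x, p) be an incentive-compatible onto mechanism without monetary transfers, i.e., p_i(t) = 0 for all agents i and all type profiles t. Then there exists a unique agent d ∈ 𝒩 (a dictator) such that for every type profile t = (t_1, …, t_n): x(t) ∈ argmax_{a ∈ 𝒜} φ_d(t_d)(a, 0). -/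
/-- `min_{a ∈ 𝒜} u (a, 0) = 0`. -/
def MinAtZeroIsZero {𝒜 : Type*} (u : 𝒜 × ℝ → ℝ) : Prop :=
  (∀ a : 𝒜, 0 ≤ u (a, 0)) ∧ ∃ a : 𝒜, u (a, 0) = 0

def IncentiveCompatible {𝒜 : Type*} {𝒩 : Type*} [DecidableEq 𝒩] {T : 𝒩 → Type*}
    (pref : ∀ i, T i → (𝒜 × ℝ → 𝒜 × ℝ → Prop))
    (x : (∀ i, T i) → 𝒜) (p : 𝒩 → (∀ i, T i) → ℝ) : Prop :=
  ∀ (i : 𝒩) (t : ∀ j, T j) (t' : T i),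
    pref i (t i) (x t, p i t)
      (x (Function.update t i t'), p i (Function.update t i t'))

set_option linter.unusedSectionVars false
set_option linter.unusedVariables false

namespace GSaux

open Function

variable {𝒜 : Type*} [Fintype 𝒜] [DecidableEq 𝒜]

/-- valuation with top `a` (value 2), second `b` (value 1), rest 0. -/
noncomputable def PP (a b : 𝒜) : 𝒜 → ℝ := fun e => if e = a then 2 else if e = b then 1 else 0

/-- indicator valuation of `a`. -/
noncomputable def TT (a : 𝒜) : 𝒜 → ℝ := fun e => if e = a then 1 else 0

/-- `x` is the unique top of `v`. -/
def UT (x : 𝒜) (v : 𝒜 → ℝ) : Prop := ∀ e, e ≠ x → v e < v x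

lemma UT.eq_of_le {x : 𝒜} {v : 𝒜 → ℝ} (h : UT x v) {e : 𝒜} (hle : v x ≤ v e) : e = x := by
  by_contra hne
  exact absurd hle (not_le.2 (h e hne))

lemma PP_fst (a b : 𝒜) : PP a b a = 2 := by simp [PP]

lemma PP_snd {a b : 𝒜} (h : b ≠ a) : PP a b b = 1 := by simp [PP, h]

lemma PP_other {a b e : 𝒜} (h1 : e ≠ a) (h2 : e ≠ b) : PP a b e = 0 := by simp [PP, h1, h2]

lemma PP_cases {a b e : 𝒜} (h : (1:ℝ) ≤ PP a b e) : e = a ∨ e = b := by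
  by_cases h1 : e = a
  · exact Or.inl h1
  by_cases h2 : e = b
  · exact Or.inr h2
  rw [PP_other h1 h2] at h; norm_num at h

lemma PP_eq_fst {a b e : 𝒜} (h : (2:ℝ) ≤ PP a b e) : e = a := by
  by_cases h1 : e = a
  · exact h1
  exfalso
  by_cases h2 : e = b
  · subst h2; rw [PP_snd h1] at h; norm_num at h
  · rw [PP_other h1 h2] at h; norm_num at h

lemma PP_nonpos {a b e : 𝒜} (h : PP a b e ≤ 0) : e ≠ a ∧ e ≠ b := by
  constructor
  · rintro rfl; rw [PP_fst] at h; norm_num at h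
  · rintro rfl
    by_cases h1 : e = a
    · subst h1; rw [PP_fst] at h; norm_num at h
    · rw [PP_snd h1] at h; norm_num at h

lemma PP_le_one {a b e : 𝒜} (h : e ≠ a) : PP a b e ≤ 1 := by
  by_cases h2 : e = b
  · subst h2; rw [PP_snd h]
  · rw [PP_other h h2]; norm_num

lemma UT_PP {a b : 𝒜} (h : b ≠ a) : UT a (PP a b) := by
  intro e he
  calc PP a b e ≤ 1 := PP_le_one he
  _ < 2 := by norm_num
  _ = PP a b a := (PP_fst a b).symm

lemma TT_self (a : 𝒜) : TT a a = 1 := by simp [TT]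

lemma TT_other {a e : 𝒜} (h : e ≠ a) : TT a e = 0 := by simp [TT, h]

lemma UT_TT (a : 𝒜) : UT a (TT a) := by
  intro e he
  rw [TT_self, TT_other he]; norm_num

lemma TT_eq {a e : 𝒜} (h : (1:ℝ) ≤ TT a e) : e = a := by
  by_contra hne
  rw [TT_other hne] at h; norm_num at h

lemma exists_two_ne (h3 : 3 ≤ Fintype.card 𝒜) (a : 𝒜) :
    ∃ b c : 𝒜, b ≠ c ∧ b ≠ a ∧ c ≠ a := by
  have hcard : 1 < (Finset.univ.erase a).card := by
    have := Finset.card_erase_of_mem (Finset.mem_univ a)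
    rw [this, Finset.card_univ]
    omega
  obtain ⟨b, hb, c, hc, hbc⟩ := Finset.one_lt_card.mp hcard
  exact ⟨b, c, hbc, (Finset.mem_erase.mp hb).1, (Finset.mem_erase.mp hc).1⟩

section TwoVoter

variable (g : (𝒜 → ℝ) → (𝒜 → ℝ) → 𝒜)

def SP1 : Prop := ∀ v₁ v₂ w : 𝒜 → ℝ, v₁ (g w v₂) ≤ v₁ (g v₁ v₂)
def SP2 : Prop := ∀ v₁ v₂ w : 𝒜 → ℝ, v₂ (g v₁ w) ≤ v₂ (g v₁ v₂)
def UNAN : Prop := ∀ (x : 𝒜) (v₁ v₂ : 𝒜 → ℝ), UT x v₁ → UT x v₂ → g v₁ v₂ = x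

variable {g}

lemma swap_SP1 (h : SP2 g) : SP1 (Function.swap g) := fun v₁ v₂ w => h v₂ v₁ w
lemma swap_SP2 (h : SP1 g) : SP2 (Function.swap g) := fun v₁ v₂ w => h v₂ v₁ w
lemma swap_UNAN (h : UNAN g) : UNAN (Function.swap g) := fun x v₁ v₂ h1 h2 => h x v₂ v₁ h2 h1

/-- Pareto for two voters. -/
lemma pareto2 (hg1 : SP1 g) (hg2 : SP2 g) (hgU : UNAN g)
    {v₁ v₂ : 𝒜 → ℝ} {x y : 𝒜} (hxy : y ≠ x) (h1 : v₁ y < v₁ x) (h2 : v₂ y < v₂ x) :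
    g v₁ v₂ ≠ y := by
  intro h
  -- step 1: g (PP x y) v₂ = y
  have hb : PP x y (g v₁ v₂) ≤ PP x y (g (PP x y) v₂) := hg1 (PP x y) v₂ v₁
  rw [h, PP_snd hxy] at hb
  have hz1 : g (PP x y) v₂ = x ∨ g (PP x y) v₂ = y := PP_cases hb
  have hz1y : g (PP x y) v₂ = y := by
    rcases hz1 with hz | hz
    · exfalso
      have := hg1 v₁ v₂ (PP x y)
      rw [h, hz] at this
      exact absurd this (not_le.2 h1)
    · exact hz
  -- step 2: contradiction via unanimity on the diagonal
  have hd : g (PP x y) (PP x y) = x := hgU x _ _ (UT_PP hxy) (UT_PP hxy)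
  have := hg2 (PP x y) v₂ (PP x y)
  rw [hz1y, hd] at this
  exact absurd this (not_le.2 h2)

lemma claim1 (hg1 : SP1 g) (hgU : UNAN g) {a b : 𝒜} (hab : a ≠ b) :
    g (PP a b) (PP b a) = a ∨ g (PP a b) (PP b a) = b := by
  have hU : g (PP b a) (PP b a) = b := hgU b _ _ (UT_PP hab) (UT_PP hab)
  have := hg1 (PP a b) (PP b a) (PP b a)
  rw [hU, PP_snd hab.symm] at this
  exact PP_cases this

/-- key contagion lemma. -/
lemma K1 (hg1 : SP1 g) (hg2 : SP2 g) (hgU : UNAN g) {a b c : 𝒜}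
    (hab : a ≠ b) (hca : c ≠ a) (hcb : c ≠ b)
    (F1 : g (PP a b) (PP b a) = a) : g (PP a c) (PP c a) = a := by
  rcases claim1 hg1 hgU hca.symm with h | F2
  · exact h
  exfalso
  -- Д1 : nothing voter 1 reports against (PP c a) yields a
  have D1 : ∀ w₁, g w₁ (PP c a) ≠ a := by
    intro w₁ hw
    have := hg1 (PP a c) (PP c a) w₁
    rw [hw, F2, PP_snd hca, PP_fst] at this
    norm_num at this
  -- Д2 : voter 2 can never obtain b against (PP a b)
  have D2 : ∀ w₂, g (PP a b) w₂ ≠ b := by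
    intro w₂ hw
    have := hg2 (PP a b) (PP b a) w₂
    rw [hw, F1, PP_fst, PP_snd hab] at this
    norm_num at this
  set x₀ := g (PP a b) (PP c a) with hx₀
  have hx₀a : x₀ ≠ a := D1 (PP a b)
  have hx₀b : x₀ ≠ b := D2 (PP c a)
  by_cases hx₀c : x₀ = c
  · -- main contradiction chain
    have hz : g (PP a b) (PP c b) = c := by
      have := hg2 (PP a b) (PP c b) (PP c a)
      rw [← hx₀, hx₀c, PP_fst] at this
      exact PP_eq_fst this
    have hy : g (PP a b) (PP b c) = c := by
      have := hg2 (PP a b) (PP b c) (PP c b)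
      rw [hz, PP_snd hcb] at this
      rcases PP_cases this with h | h
      · exact absurd h (D2 (PP b c))
      · exact h
    have hfin := hg1 (PP a b) (PP b c) (TT b)
    have hTb : g (TT b) (PP b c) = b := hgU b _ _ (UT_TT b) (UT_PP hcb)
    rw [hy, hTb, PP_snd hab.symm, PP_other hca hcb] at hfin
    norm_num at hfin
  · -- x₀ ∉ {a,b,c}: Pareto contradiction
    have h1 : PP c a (g (PP a b) (PP c b)) ≤ PP c a x₀ := hg2 (PP a b) (PP c a) (PP c b)
    have hx₀0 : PP c a x₀ = 0 := PP_other hx₀c hx₀a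
    rw [hx₀0] at h1
    obtain ⟨hz'c, hz'a⟩ := PP_nonpos h1
    set z' := g (PP a b) (PP c b) with hz'
    have hz'b : z' ≠ b := D2 (PP c b)
    refine pareto2 hg1 hg2 hgU (x := b) (y := z') hz'b ?_ ?_ hz'.symm
    · rw [PP_other hz'a hz'b, PP_snd hab.symm]; norm_num
    · rw [PP_other hz'c hz'b, PP_snd hcb.symm]; norm_num


/-- if the fight-winner reports a unique-top valuation, he gets his top. -/
lemma dictT (hg1 : SP1 g) (hg2 : SP2 g)
    (hW : ∀ x y : 𝒜, x ≠ y → g (PP x y) (PP y x) = x) (x : 𝒜) (w₂ : 𝒜 → ℝ) :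
    g (TT x) w₂ = x := by
  by_contra hz
  set z := g (TT x) w₂ with hzdef
  have hzx : z ≠ x := hz
  have h0 : g (PP x z) (PP z x) = x := hW x z (Ne.symm hzx)
  have hm1 : PP z x (g (PP x z) w₂) ≤ 1 := by
    have := hg2 (PP x z) (PP z x) w₂
    rw [h0, PP_snd hzx.symm] at this
    -- careful: PP z x x = 1 needs x ≠ z
    exact this
  have hmz : g (PP x z) w₂ ≠ z := by
    intro h
    rw [h, PP_fst] at hm1; norm_num at hm1
  have hm2 : (1:ℝ) ≤ PP x z (g (PP x z) w₂) := by
    have := hg1 (PP x z) w₂ (TT x)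
    rw [← hzdef, PP_snd hzx] at this
    exact this
  have hmx : g (PP x z) w₂ = x := (PP_cases hm2).resolve_right hmz
  have h3 := hg1 (TT x) w₂ (PP x z)
  rw [hmx, ← hzdef, TT_self, TT_other hzx] at h3
  norm_num at h3

lemma dict1 (hg1 : SP1 g) (hg2 : SP2 g)
    (hW : ∀ x y : 𝒜, x ≠ y → g (PP x y) (PP y x) = x) [Nonempty 𝒜] :
    ∀ (v₁ v₂ : 𝒜 → ℝ) (e : 𝒜), v₁ e ≤ v₁ (g v₁ v₂) := by
  intro v₁ v₂ e
  obtain ⟨m, _, hm⟩ := Finset.exists_max_image Finset.univ v₁ Finset.univ_nonempty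
  have h1 : g (TT m) v₂ = m := dictT hg1 hg2 hW m v₂
  have h2 := hg1 v₁ v₂ (TT m)
  rw [h1] at h2
  exact (hm e (Finset.mem_univ e)).trans h2

/-- from one win, all wins. -/
lemma onewin (hg1 : SP1 g) (hg2 : SP2 g) (hgU : UNAN g) (h3 : 3 ≤ Fintype.card 𝒜)
    {a₀ b₀ : 𝒜} (hab : a₀ ≠ b₀) (hwin : g (PP a₀ b₀) (PP b₀ a₀) = a₀) :
    ∀ x y : 𝒜, x ≠ y → g (PP x y) (PP y x) = x := by
  have hg1' : SP1 (Function.swap g) := swap_SP1 hg2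
  have hg2' : SP2 (Function.swap g) := swap_SP2 hg1
  have hgU' : UNAN (Function.swap g) := swap_UNAN hgU
  have HA : ∀ c : 𝒜, c ≠ a₀ → g (PP a₀ c) (PP c a₀) = a₀ := by
    intro c hc
    by_cases hcb : c = b₀
    · subst hcb; exact hwin
    · exact K1 hg1 hg2 hgU hab hc hcb hwin
  have LEMX : ∀ x : 𝒜, x ≠ a₀ → g (PP x a₀) (PP a₀ x) = a₀ → False := by
    intro x hx hW2
    have hW2' : Function.swap g (PP a₀ x) (PP x a₀) = a₀ := hW2
    have HA' : ∀ z : 𝒜, z ≠ a₀ → Function.swap g (PP a₀ z) (PP z a₀) = a₀ := by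
      intro z hz
      by_cases hzx : z = x
      · subst hzx; exact hW2'
      · exact K1 hg1' hg2' hgU' (Ne.symm hx) hz hzx hW2'
    obtain ⟨b', c', hbc', hb', hc'⟩ := exists_two_ne h3 a₀
    rcases claim1 hg1 hgU hbc' with hw | hw
    · have h1 : g (PP b' a₀) (PP a₀ b') = b' :=
        K1 hg1 hg2 hgU hbc' (Ne.symm hb') (Ne.symm hc') hw
      have h2 : Function.swap g (PP a₀ b') (PP b' a₀) = a₀ := HA' b' hb'
      have : g (PP b' a₀) (PP a₀ b') = a₀ := h2
      rw [h1] at this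
      exact hb' this
    · have hw' : Function.swap g (PP c' b') (PP b' c') = c' := hw
      have h1 : Function.swap g (PP c' a₀) (PP a₀ c') = c' :=
        K1 hg1' hg2' hgU' (Ne.symm hbc') (Ne.symm hc') (Ne.symm hb') hw'
      have h2 : g (PP a₀ c') (PP c' a₀) = c' := h1
      rw [HA c' hc'] at h2
      exact hc' h2.symm
  have HB : ∀ x : 𝒜, x ≠ a₀ → g (PP x a₀) (PP a₀ x) = x := by
    intro x hx
    rcases claim1 hg1 hgU hx with h | h
    · exact h
    · exact absurd h (fun hh => LEMX x hx hh)
  intro x y hxy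
  by_cases hx : x = a₀
  · subst hx; exact HA y (Ne.symm hxy)
  by_cases hy : y = a₀
  · subst hy; exact HB x hx
  · exact K1 hg1 hg2 hgU hx (Ne.symm hxy) hy (HB x hx)

/-- the two-voter Gibbard–Satterthwaite theorem. -/
lemma main2 (hg1 : SP1 g) (hg2 : SP2 g) (hgU : UNAN g) (h3 : 3 ≤ Fintype.card 𝒜)
    [Nonempty 𝒜] :
    (∀ (v₁ v₂ : 𝒜 → ℝ) (e : 𝒜), v₁ e ≤ v₁ (g v₁ v₂)) ∨
    (∀ (v₁ v₂ : 𝒜 → ℝ) (e : 𝒜), v₂ e ≤ v₂ (g v₁ v₂)) := by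
  obtain ⟨a₀, b₀, hab⟩ := Fintype.exists_pair_of_one_lt_card (α := 𝒜) (by omega)
  have hg1' : SP1 (Function.swap g) := swap_SP1 hg2
  have hg2' : SP2 (Function.swap g) := swap_SP2 hg1
  have hgU' : UNAN (Function.swap g) := swap_UNAN hgU
  rcases claim1 hg1 hgU hab with hw | hw
  · exact Or.inl (dict1 hg1 hg2 (onewin hg1 hg2 hgU h3 hab hw))
  · right
    have hw' : Function.swap g (PP b₀ a₀) (PP a₀ b₀) = b₀ := hw
    have := dict1 hg1' hg2' (onewin hg1' hg2' hgU' h3 (Ne.symm hab) hw')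
    intro v₁ v₂ e
    exact this v₂ v₁ e

end TwoVoter

lemma exists_inj_gt (y b : 𝒜) (hyb : y ≠ b) :
    ∃ w : 𝒜 → ℝ, Function.Injective w ∧ w b < w y := by
  set e := Fintype.equivFin 𝒜 with he
  refine ⟨fun a => if a = b then (-1 : ℝ) else ((e a : ℕ) : ℝ), ?_, ?_⟩
  · intro a₁ a₂ h
    dsimp only at h
    by_cases h1 : a₁ = b <;> by_cases h2 : a₂ = b
    · rw [h1, h2]
    · exfalso
      rw [if_pos h1, if_neg h2] at h
      have : (0:ℝ) ≤ ((e a₂ : ℕ) : ℝ) := Nat.cast_nonneg _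
      linarith
    · exfalso
      rw [if_neg h1, if_pos h2] at h
      have : (0:ℝ) ≤ ((e a₁ : ℕ) : ℝ) := Nat.cast_nonneg _
      linarith
    · rw [if_neg h1, if_neg h2] at h
      have : ((e a₁ : ℕ)) = ((e a₂ : ℕ)) := Nat.cast_injective h
      exact e.injective (Fin.ext this)
  · dsimp only
    rw [if_pos rfl, if_neg hyb]
    have : (0:ℝ) ≤ ((e y : ℕ) : ℝ) := Nat.cast_nonneg _
    linarith

section NVoter

variable {𝒩 : Type*} [DecidableEq 𝒩]

/-- strategyproofness. -/
def SPn (F : (𝒩 → 𝒜 → ℝ) → 𝒜) : Prop :=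
  ∀ (v : 𝒩 → 𝒜 → ℝ) (i : 𝒩) (w : 𝒜 → ℝ),
    v i (F (Function.update v i w)) ≤ v i (F v)

lemma unanimity [Fintype 𝒩] (F : (𝒩 → 𝒜 → ℝ) → 𝒜) (hSP : SPn F)
    (hOnto : Function.Surjective F) {x : 𝒜} (v : 𝒩 → 𝒜 → ℝ) (h : ∀ i, UT x (v i)) :
    F v = x := by
  obtain ⟨v₀, hv₀⟩ := hOnto x
  have key : ∀ s : Finset 𝒩, F (fun i => if i ∈ s then v i else v₀ i) = x := by
    intro s
    induction s using Finset.induction_on with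
    | empty =>
      have : (fun i => if i ∈ (∅ : Finset 𝒩) then v i else v₀ i) = v₀ := by
        funext i; simp
      rw [this]; exact hv₀
    | @insert j s hj IH =>
      set R := (fun i => if i ∈ s then v i else v₀ i) with hRdef
      have hR : (fun i => if i ∈ insert j s then v i else v₀ i)
          = Function.update R j (v j) := by
        funext i
        by_cases hij : i = j
        · subst hij
          rw [Function.update_self, if_pos (Finset.mem_insert_self i s)]
        · rw [Function.update_of_ne hij]
          simp only [hRdef, Finset.mem_insert, hij, false_or]
      rw [hR]
      have h1 := hSP (Function.update R j (v j)) j (R j)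
      rw [Function.update_idem, Function.update_eq_self, Function.update_self, IH] at h1
      exact ((h j).eq_of_le h1).symm ▸ rfl
  have := key Finset.univ
  have huniv : (fun i => if i ∈ (Finset.univ : Finset 𝒩) then v i else v₀ i) = v := by
    funext i; simp
  rwa [huniv] at this

/-- merge embedding: voter `p` copies voter `q`. -/
noncomputable def emb (p q : 𝒩) (hqp : q ≠ p) (v : {i : 𝒩 // i ≠ p} → 𝒜 → ℝ) : 𝒩 → 𝒜 → ℝ :=
  fun i => if h : i = p then v ⟨q, hqp⟩ else v ⟨i, h⟩

variable {p q : 𝒩} (hqp : q ≠ p)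

lemma emb_p (v : {i : 𝒩 // i ≠ p} → 𝒜 → ℝ) : emb p q hqp v p = v ⟨q, hqp⟩ := dif_pos rfl

lemma emb_o (v : {i : 𝒩 // i ≠ p} → 𝒜 → ℝ) (j : {i : 𝒩 // i ≠ p}) :
    emb p q hqp v j.1 = v j := by
  show dite _ _ _ = _
  rw [dif_neg j.2]

lemma emb_update_q (v : {i : 𝒩 // i ≠ p} → 𝒜 → ℝ) (w : 𝒜 → ℝ) :
    emb p q hqp (Function.update v ⟨q, hqp⟩ w)
      = Function.update (Function.update (emb p q hqp v) p w) q w := by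
  funext i
  by_cases hip : i = p
  · subst hip
    rw [Function.update_of_ne hqp.symm, Function.update_self, emb_p, Function.update_self]
  · by_cases hiq : i = q
    · rw [hiq, Function.update_self,
        show emb p q hqp (Function.update v ⟨q, hqp⟩ w) q
          = (Function.update v ⟨q, hqp⟩ w) ⟨q, hqp⟩ from emb_o hqp _ ⟨q, hqp⟩,
        Function.update_self]
    · have h1 : emb p q hqp (Function.update v ⟨q, hqp⟩ w) i
          = (Function.update v ⟨q, hqp⟩ w) ⟨i, hip⟩ := emb_o hqp _ ⟨i, hip⟩
      have h2 : (⟨i, hip⟩ : {i : 𝒩 // i ≠ p}) ≠ ⟨q, hqp⟩ := by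
        intro hh; exact hiq (congrArg Subtype.val hh)
      rw [h1, Function.update_of_ne h2, Function.update_of_ne hiq,
        Function.update_of_ne hip]
      exact (emb_o hqp v ⟨i, hip⟩).symm

lemma emb_update_o (v : {i : 𝒩 // i ≠ p} → 𝒜 → ℝ) (j : {i : 𝒩 // i ≠ p}) (w : 𝒜 → ℝ)
    (hj : j ≠ ⟨q, hqp⟩) :
    emb p q hqp (Function.update v j w) = Function.update (emb p q hqp v) j.1 w := by
  funext i
  by_cases hip : i = p
  · subst hip
    rw [emb_p, Function.update_of_ne (Ne.symm hj), Function.update_of_ne (Ne.symm j.2), emb_p]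
  · by_cases hij : i = j.1
    · have : (⟨i, hip⟩ : {i : 𝒩 // i ≠ p}) = j := Subtype.ext hij
      rw [show emb p q hqp (Function.update v j w) i
          = (Function.update v j w) ⟨i, hip⟩ from emb_o hqp _ ⟨i, hip⟩, this,
        Function.update_self, hij, Function.update_self]
    · have h2 : (⟨i, hip⟩ : {i : 𝒩 // i ≠ p}) ≠ j := fun hh => hij (by rw [← hh])
      rw [show emb p q hqp (Function.update v j w) i
          = (Function.update v j w) ⟨i, hip⟩ from emb_o hqp _ ⟨i, hip⟩,
        Function.update_of_ne h2, Function.update_of_ne hij]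
      exact (emb_o hqp v ⟨i, hip⟩).symm

lemma emb_restr (t : 𝒩 → 𝒜 → ℝ) :
    emb p q hqp (fun j => t j.1) = Function.update t p (t q) := by
  funext i
  by_cases hip : i = p
  · subst hip; rw [emb_p, Function.update_self]
  · rw [Function.update_of_ne hip,
      show emb p q hqp (fun j => t j.1) i = t i from emb_o hqp _ ⟨i, hip⟩]

end NVoter

section Merge

variable {𝒩 : Type*} [DecidableEq 𝒩]

/-- voter `p` dictates the two-voter mechanism obtained by fixing the rest `R`. -/
def DICp (F : (𝒩 → 𝒜 → ℝ) → 𝒜) (p q : 𝒩) (R : 𝒩 → 𝒜 → ℝ) : Prop :=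
  ∀ (v₁ v₂ : 𝒜 → ℝ) (e : 𝒜),
    v₁ e ≤ v₁ (F (Function.update (Function.update R p v₁) q v₂))

/-- voter `q` dictates the two-voter mechanism obtained by fixing the rest `R`. -/
def DICq (F : (𝒩 → 𝒜 → ℝ) → 𝒜) (p q : 𝒩) (R : 𝒩 → 𝒜 → ℝ) : Prop :=
  ∀ (v₁ v₂ : 𝒜 → ℝ) (e : 𝒜),
    v₂ e ≤ v₂ (F (Function.update (Function.update R p v₁) q v₂))

lemma dic_out_p {F : (𝒩 → 𝒜 → ℝ) → 𝒜} {p q : 𝒩} {R : 𝒩 → 𝒜 → ℝ}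
    (h : DICp F p q R) (a b : 𝒜) :
    F (Function.update (Function.update R p (TT a)) q (TT b)) = a := by
  have := h (TT a) (TT b) a
  rw [TT_self] at this
  exact TT_eq this

lemma dic_out_q {F : (𝒩 → 𝒜 → ℝ) → 𝒜} {p q : 𝒩} {R : 𝒩 → 𝒜 → ℝ}
    (h : DICq F p q R) (a b : 𝒜) :
    F (Function.update (Function.update R p (TT a)) q (TT b)) = b := by
  have := h (TT a) (TT b) b
  rw [TT_self] at this
  exact TT_eq this

lemma dic_flip {F : (𝒩 → 𝒜 → ℝ) → 𝒜} (hSP : SPn F) {p q j : 𝒩}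
    (hjp : j ≠ p) (hjq : j ≠ q) {R : 𝒩 → 𝒜 → ℝ} {u : 𝒜 → ℝ}
    (hcase : (DICp F p q R ∧ DICq F p q (Function.update R j u)) ∨
             (DICq F p q R ∧ DICp F p q (Function.update R j u))) :
    ∀ a b : 𝒜, a ≠ b → u a ≤ u b := by
  intro a b hab
  rcases hcase with ⟨h1, h2⟩ | ⟨h1, h2⟩
  · have hBA : Function.update (Function.update (Function.update R j u) p (TT a)) q (TT b)
        = Function.update (Function.update (Function.update R p (TT a)) q (TT b)) j u := by
      rw [Function.update_comm hjp, Function.update_comm hjq]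
    have e1 : F (Function.update (Function.update R p (TT a)) q (TT b)) = a :=
      dic_out_p h1 a b
    have e2 : F (Function.update (Function.update (Function.update R p (TT a)) q (TT b)) j u)
        = b := by rw [← hBA]; exact dic_out_q h2 a b
    have hAj : (Function.update (Function.update R p (TT a)) q (TT b)) j = R j := by
      rw [Function.update_of_ne hjq, Function.update_of_ne hjp]
    have key := hSP (Function.update (Function.update (Function.update R p (TT a)) q (TT b)) j u)
      j ((Function.update (Function.update R p (TT a)) q (TT b)) j)
    rw [Function.update_idem, Function.update_eq_self, Function.update_self, e1, e2] at key
    exact key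
  · have hBA : Function.update (Function.update (Function.update R j u) p (TT b)) q (TT a)
        = Function.update (Function.update (Function.update R p (TT b)) q (TT a)) j u := by
      rw [Function.update_comm hjp, Function.update_comm hjq]
    have e1 : F (Function.update (Function.update R p (TT b)) q (TT a)) = a :=
      dic_out_q h1 b a
    have e2 : F (Function.update (Function.update (Function.update R p (TT b)) q (TT a)) j u)
        = b := by rw [← hBA]; exact dic_out_p h2 b a
    have key := hSP (Function.update (Function.update (Function.update R p (TT b)) q (TT a)) j u)
      j ((Function.update (Function.update R p (TT b)) q (TT a)) j)
    rw [Function.update_idem, Function.update_eq_self, Function.update_self, e1, e2] at key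
    exact key

lemma dic_chain [Fintype 𝒩] {F : (𝒩 → 𝒜 → ℝ) → 𝒜} (hSP : SPn F) {p q : 𝒩} (hpq : p ≠ q)
    (hside : ∀ R, DICp F p q R ∨ DICq F p q R) {a₀ b₀ : 𝒜} (hab0 : a₀ ≠ b₀) :
    ∀ R : 𝒩 → 𝒜 → ℝ, (DICp F p q R ↔ DICp F p q (fun _ => TT a₀)) := by
  have hqp : q ≠ p := Ne.symm hpq
  have hstep : ∀ (R : 𝒩 → 𝒜 → ℝ) (j : 𝒩), DICp F p q R ↔ DICp F p q (Function.update R j (TT a₀)) := by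
    intro R j
    by_cases hjp : j = p
    · rw [hjp]
      have hE : ∀ v₁ v₂ : 𝒜 → ℝ,
          Function.update (Function.update (Function.update R p (TT a₀)) p v₁) q v₂
            = Function.update (Function.update R p v₁) q v₂ := by
        intro v₁ v₂; rw [Function.update_idem]
      constructor
      · intro h v₁ v₂ e; rw [hE v₁ v₂]; exact h v₁ v₂ e
      · intro h v₁ v₂ e; have h' := h v₁ v₂ e; rw [hE v₁ v₂] at h'; exact h'
    · by_cases hjq : j = q
      · rw [hjq]
        have hE : ∀ v₁ v₂ : 𝒜 → ℝ,
            Function.update (Function.update (Function.update R q (TT a₀)) p v₁) q v₂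
              = Function.update (Function.update R p v₁) q v₂ := by
          intro v₁ v₂; rw [Function.update_comm hqp, Function.update_idem]
        constructor
        · intro h v₁ v₂ e; rw [hE v₁ v₂]; exact h v₁ v₂ e
        · intro h v₁ v₂ e; have h' := h v₁ v₂ e; rw [hE v₁ v₂] at h'; exact h'
      · constructor
        · intro h
          rcases hside (Function.update R j (TT a₀)) with h' | h'
          · exact h'
          · exfalso
            have := dic_flip hSP hjp hjq (Or.inl ⟨h, h'⟩) a₀ b₀ hab0
            rw [TT_self, TT_other (Ne.symm hab0)] at this
            norm_num at this
        · intro h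
          rcases hside R with h' | h'
          · exact h'
          · exfalso
            have := dic_flip hSP hjp hjq (Or.inr ⟨h', h⟩) a₀ b₀ hab0
            rw [TT_self, TT_other (Ne.symm hab0)] at this
            norm_num at this
  intro R
  have key : ∀ s : Finset 𝒩, DICp F p q R ↔ DICp F p q (fun i => if i ∈ s then TT a₀ else R i) := by
    intro s
    induction s using Finset.induction_on with
    | empty =>
      have : (fun i => if i ∈ (∅ : Finset 𝒩) then TT a₀ else R i) = R := by
        funext i; simp
      rw [this]
    | @insert j s hj IHs =>
      have hins : (fun i => if i ∈ insert j s then TT a₀ else R i)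
          = Function.update (fun i => if i ∈ s then TT a₀ else R i) j (TT a₀) := by
        funext i
        by_cases hij : i = j
        · subst hij; rw [Function.update_self, if_pos (Finset.mem_insert_self i s)]
        · rw [Function.update_of_ne hij]
          simp only [Finset.mem_insert, hij, false_or]
      rw [hins]
      exact IHs.trans (hstep _ j)
  have h1 := key Finset.univ
  have h2 : (fun i => if i ∈ (Finset.univ : Finset 𝒩) then TT a₀ else R i) = (fun _ => TT a₀) := by
    funext i; simp
  rwa [h2] at h1

end Merge

lemma update_q_self {𝒩 : Type*} [DecidableEq 𝒩] {p q : 𝒩} (hqp : q ≠ p)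
    (t : 𝒩 → 𝒜 → ℝ) (w : 𝒜 → ℝ) :
    Function.update (Function.update t p w) q (t q) = Function.update t p w := by
  funext i
  by_cases hiq : i = q
  · rw [hiq, Function.update_self, Function.update_of_ne hqp]
  · rw [Function.update_of_ne hiq]

theorem core (h3 : 3 ≤ Fintype.card 𝒜) :
    ∀ (n : ℕ) {𝒩 : Type*} [DecidableEq 𝒩] [Fintype 𝒩],
      Fintype.card 𝒩 = n → ∀ F : (𝒩 → 𝒜 → ℝ) → 𝒜, SPn F → Function.Surjective F →
      ∃ d : 𝒩, ∀ (v : 𝒩 → 𝒜 → ℝ) (e : 𝒜), v d e ≤ v d (F v) := by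
  haveI : Nonempty 𝒜 := Fintype.card_pos_iff.mp (by omega)
  intro n
  induction n using Nat.strong_induction_on with
  | _ n IH => ?_
  rcases n with _ | _ | _ | m
  · -- no voters: contradicts surjectivity
    intro 𝒩 _ _ hn F hSP hOnto
    haveI hE : IsEmpty 𝒩 := Fintype.card_eq_zero_iff.mp hn
    obtain ⟨a, b, hab⟩ := Fintype.exists_pair_of_one_lt_card (α := 𝒜) (by omega)
    obtain ⟨va, hva⟩ := hOnto a
    obtain ⟨vb, hvb⟩ := hOnto b
    have hvab : va = vb := funext fun i => isEmptyElim i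
    exact absurd (by rw [← hva, ← hvb, hvab]) hab
  · -- one voter
    intro 𝒩 _ _ hn F hSP hOnto
    obtain ⟨d, hd⟩ := Fintype.card_eq_one_iff.mp hn
    refine ⟨d, ?_⟩
    intro v e
    obtain ⟨w, hw⟩ := hOnto e
    have hweq : Function.update v d (w d) = w := by
      funext i
      have hid : i = d := hd i
      rw [hid, Function.update_self]
    have := hSP v d (w d)
    rw [hweq, hw] at this
    exact this
  · -- two voters
    intro 𝒩 _ _ hn F hSP hOnto
    obtain ⟨p, q, hpq⟩ := Fintype.exists_pair_of_one_lt_card (α := 𝒩) (by omega)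
    have hqp : q ≠ p := Ne.symm hpq
    have hcov : ∀ i : 𝒩, i = p ∨ i = q := by
      by_contra hcon
      push_neg at hcon
      obtain ⟨i, hip, hiq⟩ := hcon
      have h3' : ({i, p, q} : Finset 𝒩).card = 3 := by
        rw [Finset.card_insert_of_notMem (by simp [hip, hiq]),
          Finset.card_insert_of_notMem (by simp [hpq]), Finset.card_singleton]
      have hle := Finset.card_le_univ ({i, p, q} : Finset 𝒩)
      rw [h3'] at hle
      omega
    have hup : ∀ v₁ v₂ w : 𝒜 → ℝ,
        Function.update (fun i => if i = p then v₁ else v₂) p w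
          = (fun i => if i = p then w else v₂) := by
      intro v₁ v₂ w
      funext i
      by_cases hip : i = p
      · subst hip; simp
      · simp [Function.update_apply, hip]
    have huq : ∀ v₁ v₂ w : 𝒜 → ℝ,
        Function.update (fun i => if i = p then v₁ else v₂) q w
          = (fun i => if i = p then v₁ else w) := by
      intro v₁ v₂ w
      funext i
      rcases hcov i with hip | hiq
      · subst hip; simp [Function.update_apply, hpq]
      · subst hiq; simp [Function.update_apply, hqp]
    have hg1 : SP1 (fun v₁ v₂ : 𝒜 → ℝ => F (fun i => if i = p then v₁ else v₂)) := by
      intro v₁ v₂ w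
      have := hSP (fun i => if i = p then v₁ else v₂) p w
      rw [hup v₁ v₂ w] at this
      simpa using this
    have hg2 : SP2 (fun v₁ v₂ : 𝒜 → ℝ => F (fun i => if i = p then v₁ else v₂)) := by
      intro v₁ v₂ w
      have := hSP (fun i => if i = p then v₁ else v₂) q w
      rw [huq v₁ v₂ w] at this
      simpa [hqp] using this
    have hgU : UNAN (fun v₁ v₂ : 𝒜 → ℝ => F (fun i => if i = p then v₁ else v₂)) := by
      intro x v₁ v₂ h1 h2
      apply unanimity F hSP hOnto
      intro i
      rcases hcov i with hip | hiq
      · rw [hip]; simpa using h1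
      · by_cases hip : i = p
        · rw [hip]; simpa using h1
        · simpa [hip] using h2
    have hpair : ∀ v : 𝒩 → 𝒜 → ℝ, (fun i => if i = p then v p else v q) = v := by
      intro v
      funext i
      rcases hcov i with hip | hiq
      · rw [hip, if_pos rfl]
      · rw [hiq, if_neg hqp]
    rcases main2 hg1 hg2 hgU h3 with hL | hR
    · refine ⟨p, ?_⟩
      intro v e
      have := hL (v p) (v q) e
      rwa [hpair v] at this
    · refine ⟨q, ?_⟩
      intro v e
      have := hR (v p) (v q) e
      rwa [hpair v] at this
  · -- at least three voters: merge p into q and induct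
    intro 𝒩 _ _ hn F hSP hOnto
    obtain ⟨p, q, hpq⟩ := Fintype.exists_pair_of_one_lt_card (α := 𝒩) (by omega)
    have hqp : q ≠ p := Ne.symm hpq
    have hSPG : SPn (fun v : {i : 𝒩 // i ≠ p} → 𝒜 → ℝ => F (emb p q hqp v)) := by
      intro v j w
      by_cases hj : j = ⟨q, hqp⟩
      · rw [hj]
        dsimp only
        rw [emb_update_q]
        have s1 := hSP (Function.update (emb p q hqp v) p w) q w
        rw [Function.update_of_ne hqp,
          show emb p q hqp v q = v ⟨q, hqp⟩ from emb_o hqp v ⟨q, hqp⟩] at s1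
        have s2 := hSP (emb p q hqp v) p w
        rw [emb_p] at s2
        exact s1.trans s2
      · dsimp only
        rw [emb_update_o hqp v j w hj]
        have := hSP (emb p q hqp v) j.1 w
        rw [emb_o hqp v j] at this
        exact this
    have hGonto : Function.Surjective (fun v : {i : 𝒩 // i ≠ p} → 𝒜 → ℝ => F (emb p q hqp v)) := by
      intro a
      refine ⟨fun _ => TT a, ?_⟩
      dsimp only
      have hconst : emb p q hqp (fun _ => TT a) = fun _ => TT a := by
        funext i
        by_cases hip : i = p
        · rw [hip, emb_p]
        · exact emb_o hqp (fun _ => TT a) ⟨i, hip⟩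
      rw [hconst]
      exact unanimity F hSP hOnto _ (fun i => UT_TT a)
    have hcard' : Fintype.card {i : 𝒩 // i ≠ p} = m + 2 := by
      have h1 : Fintype.card {i : 𝒩 // ¬ (i = p)}
          = Fintype.card 𝒩 - Fintype.card {i : 𝒩 // i = p} := Fintype.card_subtype_compl _
      rw [Fintype.card_subtype_eq, hn] at h1
      exact h1
    obtain ⟨d', hd'⟩ := IH (m + 2) (by omega) hcard'
      (fun v : {i : 𝒩 // i ≠ p} → 𝒜 → ℝ => F (emb p q hqp v)) hSPG hGonto
    have hGup : ∀ (t : 𝒩 → 𝒜 → ℝ) (w : 𝒜 → ℝ),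
        F (emb p q hqp (Function.update (fun j : {i : 𝒩 // i ≠ p} => t j.1) ⟨q, hqp⟩ w))
          = F (Function.update (Function.update t p w) q w) := by
      intro t w
      rw [emb_update_q, emb_restr, Function.update_idem]
    by_cases hdq : d' = (⟨q, hqp⟩ : {i : 𝒩 // i ≠ p})
    · -- merged seat dictates: use two-voter theorem fiber-wise
      have hdiag : ∀ (R : 𝒩 → 𝒜 → ℝ) (w : 𝒜 → ℝ) (x : 𝒜), UT x w →
          F (Function.update (Function.update R p w) q w) = x := by
        intro R w x hx
        have h1 := hd' (Function.update (fun j : {i : 𝒩 // i ≠ p} => R j.1) ⟨q, hqp⟩ w) x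
        rw [hdq, Function.update_self] at h1
        rw [hGup R w] at h1
        exact hx.eq_of_le h1
      have hSP1R : ∀ R : 𝒩 → 𝒜 → ℝ,
          SP1 (fun v₁ v₂ : 𝒜 → ℝ => F (Function.update (Function.update R p v₁) q v₂)) := by
        intro R v₁ v₂ w
        have key : Function.update (Function.update (Function.update R p v₁) q v₂) p w
            = Function.update (Function.update R p w) q v₂ := by
          rw [Function.update_comm hqp, Function.update_idem]
        have := hSP (Function.update (Function.update R p v₁) q v₂) p w
        rw [key, Function.update_of_ne hpq, Function.update_self] at this
        exact this
      have hSP2R : ∀ R : 𝒩 → 𝒜 → ℝ,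
          SP2 (fun v₁ v₂ : 𝒜 → ℝ => F (Function.update (Function.update R p v₁) q v₂)) := by
        intro R v₁ v₂ w
        have := hSP (Function.update (Function.update R p v₁) q v₂) q w
        rw [Function.update_idem, Function.update_self] at this
        exact this
      have hUR : ∀ R : 𝒩 → 𝒜 → ℝ,
          UNAN (fun v₁ v₂ : 𝒜 → ℝ => F (Function.update (Function.update R p v₁) q v₂)) := by
        intro R x v₁ v₂ h1 h2
        have hdg : F (Function.update (Function.update R p v₁) q v₁) = x := hdiag R v₁ x h1
        have h' := hSP2R R v₁ v₂ v₁
        rw [show (fun v₁ v₂ : 𝒜 → ℝ => F (Function.update (Function.update R p v₁) q v₂)) v₁ v₁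
            = F (Function.update (Function.update R p v₁) q v₁) from rfl, hdg] at h'
        exact h2.eq_of_le h'
      have hside : ∀ R : 𝒩 → 𝒜 → ℝ, DICp F p q R ∨ DICq F p q R := by
        intro R
        exact main2 (hSP1R R) (hSP2R R) (hUR R) h3
      obtain ⟨a₀, b₀, hab0⟩ := Fintype.exists_pair_of_one_lt_card (α := 𝒜) (by omega)
      have hAll := dic_chain hSP hpq hside hab0
      by_cases hP : DICp F p q (fun _ => TT a₀)
      · refine ⟨p, ?_⟩
        intro v e
        have hDv : DICp F p q v := (hAll v).mpr hP
        have := hDv (v p) (v q) e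
        rwa [Function.update_eq_self, Function.update_eq_self] at this
      · refine ⟨q, ?_⟩
        intro v e
        have hDv : DICq F p q v := (hside v).resolve_left (fun h => hP ((hAll v).mp h))
        have := hDv (v p) (v q) e
        rwa [Function.update_eq_self, Function.update_eq_self] at this
    · -- an unmerged voter dictates
      have hddq : d'.1 ≠ q := fun h => hdq (Subtype.ext h)
      have AGOAL : ∀ (t : 𝒩 → 𝒜 → ℝ) (b : 𝒜), UT b (t d'.1) → F t = b := by
        intro t b hb
        have DIAG : ∀ w : 𝒜 → ℝ, F (Function.update (Function.update t p w) q w) = b := by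
          intro w
          have h1 := hd' (Function.update (fun j : {i : 𝒩 // i ≠ p} => t j.1) ⟨q, hqp⟩ w) b
          rw [Function.update_of_ne hdq] at h1
          rw [hGup t w] at h1
          exact hb.eq_of_le h1
        by_contra hy
        obtain ⟨ws, hinj, hlt⟩ := exists_inj_gt (F t) b hy
        have hDq1 : F (Function.update t p (t q)) = b := by
          have hD := DIAG (t q)
          rwa [update_q_self hqp t (t q)] at hD
        have h2a : ws b ≤ ws (F (Function.update t p ws)) := by
          have := hSP (Function.update t p ws) p (t q)
          rw [Function.update_idem, hDq1, Function.update_self] at this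
          exact this
        have h2b : ws (F (Function.update t p ws)) ≤ ws b := by
          have hD := DIAG ws
          have := hSP (Function.update (Function.update t p ws) q ws) q (t q)
          rw [Function.update_idem, update_q_self hqp t ws, Function.update_self, hD] at this
          exact this
        have hXb : F (Function.update t p ws) = b := hinj (le_antisymm h2b h2a)
        have hfin := hSP (Function.update t p ws) p (t p)
        rw [Function.update_idem, Function.update_eq_self, Function.update_self, hXb] at hfin
        exact absurd hfin (not_le.2 hlt)
      refine ⟨d'.1, ?_⟩
      intro v e
      obtain ⟨mx, _, hmx⟩ := Finset.exists_max_image Finset.univ (v d'.1) Finset.univ_nonempty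
      have hA : F (Function.update v d'.1 (TT mx)) = mx := by
        apply AGOAL
        rw [Function.update_self]
        exact UT_TT mx
      have := hSP v d'.1 (TT mx)
      rw [hA] at this
      exact (hmx e (Finset.mem_univ e)).trans this

end GSaux

theorem stmt6 {𝒜 : Type*} [Fintype 𝒜] [Nonempty 𝒜] (hcard : 3 ≤ Fintype.card 𝒜)
    {𝒩 : Type*} [Fintype 𝒩] [DecidableEq 𝒩] {T : 𝒩 → Type*}
    (pref : ∀ i, T i → (𝒜 × ℝ → 𝒜 × ℝ → Prop))
    (hpref : ∀ i (t : T i), Reflexive (pref i t) ∧ Transitive (pref i t) ∧ Total (pref i t))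
    (φ : ∀ i, T i → (𝒜 × ℝ → ℝ))
    (hφQL : ∀ i (t : T i), QuasiLinear (φ i t) ∧ MinAtZeroIsZero (φ i t))
    (hφinj : ∀ i, Function.Injective (φ i))
    (hφsurj : ∀ i (u : 𝒜 × ℝ → ℝ), QuasiLinear u → MinAtZeroIsZero u → ∃ t : T i, φ i t = u)
    (hφrep : ∀ i (t : T i), PosRepresents (φ i t) (pref i t))
    -- an incentive-compatible onto mechanism without monetary transfers
    (x : (∀ i, T i) → 𝒜) (p : 𝒩 → (∀ i, T i) → ℝ)
    (hIC : IncentiveCompatible pref x p)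
    (hOnto : Function.Surjective x)
    (hzero : ∀ (i : 𝒩) (t : ∀ j, T j), p i t = 0) :
    ∃! d : 𝒩, ∀ t : ∀ i, T i, ∀ a : 𝒜,
      φ d (t d) (a, 0) ≤ φ d (t d) (x t, 0) := by
  classical
  have hne : (Finset.univ : Finset 𝒜).Nonempty := Finset.univ_nonempty
  set nz : (𝒜 → ℝ) → (𝒜 → ℝ) := fun w a => w a - Finset.univ.inf' hne w with hnz
  have hnz_nonneg : ∀ (w : 𝒜 → ℝ) (a : 𝒜), 0 ≤ nz w a := by
    intro w a
    simp only [hnz, sub_nonneg]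
    exact Finset.inf'_le w (Finset.mem_univ a)
  have hnz_zero : ∀ w : 𝒜 → ℝ, ∃ a, nz w a = 0 := by
    intro w
    obtain ⟨a, _, ha⟩ := Finset.exists_mem_eq_inf' hne w
    exact ⟨a, by simp [hnz, ← ha]⟩
  have hQLu : ∀ w : 𝒜 → ℝ, QuasiLinear (fun pr : 𝒜 × ℝ => nz w pr.1 - pr.2) :=
    fun w => ⟨nz w, fun a z => rfl⟩
  have hM0u : ∀ w : 𝒜 → ℝ, MinAtZeroIsZero (fun pr : 𝒜 × ℝ => nz w pr.1 - pr.2) := by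
    intro w
    constructor
    · intro a; simpa using hnz_nonneg w a
    · obtain ⟨a, ha⟩ := hnz_zero w
      exact ⟨a, by simpa using ha⟩
  choose τ hτ using fun (i : 𝒩) (w : 𝒜 → ℝ) =>
    hφsurj i (fun pr : 𝒜 × ℝ => nz w pr.1 - pr.2) (hQLu w) (hM0u w)
  -- the canonical valuation of a type recovers the type
  have hval : ∀ (i : 𝒩) (ti : T i),
      (fun pr : 𝒜 × ℝ => nz (fun e => φ i ti (e, 0)) pr.1 - pr.2) = φ i ti := by
    intro i ti
    obtain ⟨⟨vv, hvv⟩, hmin⟩ := hφQL i ti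
    have hv0 : ∀ e, φ i ti (e, 0) = vv e := by
      intro e; rw [hvv e 0, sub_zero]
    have hinf : Finset.univ.inf' hne (fun e => φ i ti (e, 0)) = 0 := by
      apply le_antisymm
      · obtain ⟨a, ha⟩ := hmin.2
        exact le_of_le_of_eq (Finset.inf'_le _ (Finset.mem_univ a)) ha
      · exact Finset.le_inf' hne _ (fun b _ => hmin.1 b)
    funext pr
    obtain ⟨a, z⟩ := pr
    simp only [hnz, hinf]
    rw [hvv a z, hv0 a]
    ring
  have hcanon : ∀ (t : ∀ i, T i) (i : 𝒩), τ i (fun e => φ i (t i) (e, 0)) = t i := by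
    intro t i
    apply hφinj i
    rw [hτ i _, hval i (t i)]
  have hSPF : GSaux.SPn (fun v : 𝒩 → 𝒜 → ℝ => x (fun i => τ i (v i))) := by
    intro v i w
    have hIC' := hIC i (fun j => τ j (v j)) (τ i w)
    simp only [hzero] at hIC'
    have hup : Function.update (fun j => τ j (v j)) i (τ i w)
        = fun j => τ j (Function.update v i w j) := by
      funext j
      by_cases hji : j = i
      · rw [hji, Function.update_self, Function.update_self]
      · rw [Function.update_of_ne hji, Function.update_of_ne hji]
    rw [hup] at hIC'
    have hφeq := hτ i (v i)
    have h0 : (0:ℝ) ≤ φ i (τ i (v i)) (x (fun j => τ j (v j)), 0) := by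
      rw [hφeq]; simpa using hnz_nonneg (v i) _
    have hle := (hφrep i (τ i (v i)) (x (fun j => τ j (v j)))
      (x (fun j => τ j (Function.update v i w j))) 0 0 (Or.inl h0)).mp hIC'
    rw [hφeq] at hle
    simp only [hnz, sub_zero] at hle
    show v i (x (fun j => τ j (Function.update v i w j))) ≤ v i (x (fun j => τ j (v j)))
    linarith
  have hFonto : Function.Surjective (fun v : 𝒩 → 𝒜 → ℝ => x (fun i => τ i (v i))) := by
    intro a
    obtain ⟨t, ht⟩ := hOnto a
    refine ⟨fun i e => φ i (t i) (e, 0), ?_⟩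
    show x (fun i => τ i (fun e => φ i (t i) (e, 0))) = a
    rw [show (fun i => τ i (fun e => φ i (t i) (e, 0))) = t from funext (hcanon t)]
    exact ht
  obtain ⟨d, hd⟩ := GSaux.core hcard (Fintype.card 𝒩) rfl _ hSPF hFonto
  have hmain : ∀ (t : ∀ i, T i) (a : 𝒜), φ d (t d) (a, 0) ≤ φ d (t d) (x t, 0) := by
    intro t a
    have hFt : x (fun i => τ i (fun e => φ i (t i) (e, 0))) = x t := by
      rw [show (fun i => τ i (fun e => φ i (t i) (e, 0))) = t from funext (hcanon t)]
    have h1 := hd (fun i e => φ i (t i) (e, 0)) a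
    simp only [hFt] at h1
    exact h1
  refine ⟨d, hmain, ?_⟩
  intro d' hd'
  by_contra hne'
  obtain ⟨a, b, hab⟩ := Fintype.exists_pair_of_one_lt_card (α := 𝒜) (by omega)
  have hTTnn : ∀ c : 𝒜, ∀ e, 0 ≤ GSaux.TT c e := by
    intro c e
    by_cases h : e = c
    · rw [h, GSaux.TT_self]; norm_num
    · rw [GSaux.TT_other h]
  haveI : Nontrivial 𝒜 := Fintype.one_lt_card_iff_nontrivial.mp (by omega)
  have hTTz : ∀ c : 𝒜, ∃ e, GSaux.TT c e = 0 := by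
    intro c
    obtain ⟨c', hc'⟩ := exists_ne c
    exact ⟨c', GSaux.TT_other hc'⟩
  have hTTval : ∀ (i : 𝒩) (c : 𝒜) (e : 𝒜), φ i (τ i (GSaux.TT c)) (e, 0) = GSaux.TT c e := by
    intro i c e
    rw [hτ i (GSaux.TT c)]
    have hinf : Finset.univ.inf' hne (GSaux.TT c) = 0 := by
      apply le_antisymm
      · obtain ⟨e0, he0⟩ := hTTz c
        exact le_of_le_of_eq (Finset.inf'_le _ (Finset.mem_univ e0)) he0
      · exact Finset.le_inf' hne _ (fun e' _ => hTTnn c e')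
    simp [hnz, hinf]
  set t : ∀ i, T i := fun i => τ i (if i = d' then GSaux.TT a else GSaux.TT b) with htdef
  have htd' : t d' = τ d' (GSaux.TT a) := by rw [htdef]; simp
  have htd : t d = τ d (GSaux.TT b) := by
    rw [htdef]
    simp only [if_neg (fun h : d = d' => hne' h.symm)]
  have hxa : x t = a := by
    have h1 := hd' t a
    rw [htd'] at h1
    rw [hTTval d' a a, hTTval d' a (x t), GSaux.TT_self] at h1
    exact GSaux.TT_eq h1
  have hxb : x t = b := by
    have h1 := hmain t b
    rw [htd] at h1
    rw [hTTval d b b, hTTval d b (x t), GSaux.TT_self] at h1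
    exact GSaux.TT_eq h1
  exact hab (hxa.symm.trans hxb)
end

section
/- Let u : 𝒜 × ℝ → ℝ be a utility function that is strongly downward monotone in the payment. Then the preference induced by u is represented by a quasi-linear utility function (i.e., there exists a quasi-linear w such that for all a, b, z_a, z_b: u(a, z_a) ≥ u(b, z_b) ⇔ w(a, z_a) ≥ w(b, z_b)) if and only if there exist a function v : 𝒜 → ℝ and a strictly increasing function φ : ℝ → ℝ such that u(a, z) = φ(v(a) − z) for all a ∈ 𝒜 and z ∈ ℝ. -/
theorem stmt9 {𝒜 : Type*} [Fintype 𝒜] [Nonempty 𝒜] (u : 𝒜 × ℝ → ℝ)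
    (hmono : ∀ a : 𝒜, StrictAnti fun z => u (a, z)) :
    -- the preference induced by `u` is represented by a quasi-linear utility function
    (∃ w : 𝒜 × ℝ → ℝ, QuasiLinear w ∧
        ∀ (a b : 𝒜) (za zb : ℝ), u (b, zb) ≤ u (a, za) ↔ w (b, zb) ≤ w (a, za)) ↔
    -- iff `u` is a monotone transformation of a quasi-linear utility function
    (∃ (v : 𝒜 → ℝ) (φ : ℝ → ℝ), StrictMono φ ∧ ∀ (a : 𝒜) (z : ℝ), u (a, z) = φ (v a - z)) := by
  constructor
  · rintro ⟨w, ⟨v, hv⟩, hrep⟩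
    obtain ⟨a₀⟩ := (inferInstance : Nonempty 𝒜)
    refine ⟨v, fun t => u (a₀, v a₀ - t), ?_, ?_⟩
    · intro s t hst
      exact hmono a₀ (by linarith)
    · intro a z
      have h1 : u (a, z) ≤ u (a₀, v a₀ - (v a - z)) := by
        rw [hrep a₀ a, hv, hv]; linarith
      have h2 : u (a₀, v a₀ - (v a - z)) ≤ u (a, z) := by
        rw [hrep a a₀, hv, hv]; linarith
      exact (le_antisymm h1 h2).symm ▸ rfl
  · rintro ⟨v, φ, hφ, h⟩
    refine ⟨fun p => v p.1 - p.2, ⟨v, fun a z => rfl⟩, fun a b za zb => ?_⟩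
    simp only [h]
    exact hφ.le_iff_le
end

section
/- Let u : 𝒜 × ℝ → ℝ be a utility function that is strongly downward monotone in the payment. Then the preference induced by u is pos-represented by a quasi-linear utility function (i.e., there exists a quasi-linear w such that for all a, b, z_a, z_b with w(a, z_a) ≥ 0 or w(b, z_b) ≥ 0: u(a, z_a) ≥ u(b, z_b) ⇔ w(a, z_a) ≥ w(b, z_b)) if and only if there exist a function v : 𝒜 → ℝ and a strictly increasing function φ : ℝ → ℝ such that u(a, z) = φ(v(a) − z) whenever z ≤ v(a). -/
theorem stmt10 {𝒜 : Type*} [Fintype 𝒜] [Nonempty 𝒜] (u : 𝒜 × ℝ → ℝ)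
    (hmono : ∀ a : 𝒜, StrictAnti fun z => u (a, z)) :
    -- the preference induced by `u` is pos-represented by a quasi-linear utility function
    (∃ w : 𝒜 × ℝ → ℝ, QuasiLinear w ∧
        ∀ (a b : 𝒜) (za zb : ℝ), (0 ≤ w (a, za) ∨ 0 ≤ w (b, zb)) →
          (u (b, zb) ≤ u (a, za) ↔ w (b, zb) ≤ w (a, za))) ↔
    -- iff `u` is a monotone transformation of a quasi-linear utility function
    -- on the relevant region
    (∃ (v : 𝒜 → ℝ) (φ : ℝ → ℝ), StrictMono φ ∧
        ∀ (a : 𝒜) (z : ℝ), z ≤ v a → u (a, z) = φ (v a - z)) := by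
  constructor
  · rintro ⟨w, ⟨v, hv⟩, hrep⟩
    obtain ⟨a₀⟩ := ‹Nonempty 𝒜›
    refine ⟨v, fun t => if 0 ≤ t then u (a₀, v a₀ - t) else u (a₀, v a₀) + t, ?_, ?_⟩
    · intro s t hst
      by_cases hs : 0 ≤ s
      · have ht : 0 ≤ t := le_trans hs hst.le
        simp only [hs, ht, if_pos]
        exact hmono a₀ (by linarith)
      · by_cases ht : 0 ≤ t
        · simp only [hs, ht, if_pos, if_neg, not_false_iff]
          have h2 : u (a₀, v a₀) ≤ u (a₀, v a₀ - t) := by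
            rcases eq_or_lt_of_le ht with h | h
            · rw [← h]; simp
            · exact le_of_lt (hmono a₀ (by linarith))
          push_neg at hs
          linarith
        · simp only [hs, ht, if_neg, not_false_iff]
          linarith
    · intro a z hz
      have h0 : 0 ≤ v a - z := by linarith
      simp only [if_pos h0]
      have hw1 : w (a, z) = v a - z := hv a z
      have hw2 : w (a₀, v a₀ - (v a - z)) = v a - z := by rw [hv]; ring
      have h1 := hrep a a₀ z (v a₀ - (v a - z)) (Or.inl (by rw [hw1]; exact h0))
      have h2 := hrep a₀ a (v a₀ - (v a - z)) z (Or.inl (by rw [hw2]; exact h0))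
      exact le_antisymm (h2.2 (by rw [hw1, hw2])) (h1.2 (by rw [hw1, hw2]))
  · rintro ⟨v, φ, hφ, hu⟩
    refine ⟨fun p => v p.1 - p.2, ⟨v, fun a z => rfl⟩, ?_⟩
    intro a b za zb h
    simp only at h ⊢
    have key : ∀ (c : 𝒜) (zc : ℝ), v c < zc → u (c, zc) < φ 0 := by
      intro c zc hc
      have h1 : u (c, zc) < u (c, v c) := hmono c hc
      have h2 : u (c, v c) = φ 0 := by rw [hu c (v c) le_rfl, sub_self]
      linarith
    by_cases ha : 0 ≤ v a - za <;> by_cases hb : 0 ≤ v b - zb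
    · rw [hu a za (by linarith), hu b zb (by linarith)]
      exact hφ.le_iff_le
    · have hb' : v b < zb := by linarith
      have h1 : u (b, zb) < φ 0 := key b zb hb'
      have h2 : φ 0 ≤ φ (v a - za) := hφ.monotone ha
      rw [hu a za (by linarith)]
      constructor
      · intro _; linarith
      · intro _; linarith
    · have ha' : v a < za := by linarith
      have h1 : u (a, za) < φ 0 := key a za ha'
      have h2 : φ 0 ≤ φ (v b - zb) := hφ.monotone hb
      rw [hu b zb (by linarith)]
      constructor
      · intro h3; linarith
      · intro h3; linarith
    · rcases h with h | h <;> linarith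
end

section
/- Let ≽ be a preference on 𝒜 × ℝ that is strongly downward monotone in money. Then ≽ is represented by a quasi-linear utility function if and only if there exist an alternative a* ∈ 𝒜 and a payment z* ∈ ℝ such that: (1) ≽ is continuous in money, i.e., for all a, b ∈ 𝒜 the set {(z_a, z_b) ∈ ℝ² : (a, z_a) ≽ (b, z_b)} is closed in ℝ²; (2) for every x ∈ 𝒜 there exist z_x, ẑ_x ∈ ℝ with (x, z_x) ≺ (a*, z*) ≺ (x, ẑ_x); (3) for all x, y ∈ 𝒜 and z_x, z_y ∈ ℝ with (x, z_x) ≽ (y, z_y), it holds that (x, z_x − α) ≽ (y, z_y − α) for every α ∈ ℝ. -/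
/-- `u` represents the preference `R` on `𝒜 × ℝ`. -/
def Represents {𝒜 : Type*} (u : 𝒜 × ℝ → ℝ) (R : 𝒜 × ℝ → 𝒜 × ℝ → Prop) : Prop :=
  ∀ (a b : 𝒜) (za zb : ℝ), R (a, za) (b, zb) ↔ u (b, zb) ≤ u (a, za)

/-- The strict part of a preference: `p ≻ q`. -/
def StrictPref {𝒜 : Type*} (R : 𝒜 × ℝ → 𝒜 × ℝ → Prop) (p q : 𝒜 × ℝ) : Prop :=
  R p q ∧ ¬ R q p

theorem stmt11 {𝒜 : Type*} [Fintype 𝒜] [Nonempty 𝒜]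
    (R : 𝒜 × ℝ → 𝒜 × ℝ → Prop)
    (hRrefl : Reflexive R) (hRtrans : Transitive R) (hRtotal : Total R)
    -- strongly downward monotone in money
    (hmono : ∀ (a : 𝒜) (z z' : ℝ), z < z' → StrictPref R (a, z) (a, z')) :
    (∃ u : 𝒜 × ℝ → ℝ, QuasiLinear u ∧ Represents u R) ↔
    (∃ (astar : 𝒜) (zstar : ℝ),
      -- (1) continuity in money
      (∀ a b : 𝒜, IsClosed {p : ℝ × ℝ | R (a, p.1) (b, p.2)}) ∧
      -- (2) for every alternative, (a*, z*) is strictly in between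
      (∀ x : 𝒜, ∃ zx zhat : ℝ,
        StrictPref R (astar, zstar) (x, zx) ∧ StrictPref R (x, zhat) (astar, zstar)) ∧
      -- (3) invariance under common shifts of the payments
      (∀ (x y : 𝒜) (zx zy : ℝ), R (x, zx) (y, zy) →
        ∀ α : ℝ, R (x, zx - α) (y, zy - α))) := by
  constructor
  · rintro ⟨u, ⟨v, hv⟩, hrep⟩
    obtain ⟨astar⟩ := ‹Nonempty 𝒜›
    refine ⟨astar, 0, ?_, ?_, ?_⟩
    · intro a b
      have hset : {p : ℝ × ℝ | R (a, p.1) (b, p.2)} = {p : ℝ × ℝ | v b - p.2 ≤ v a - p.1} := by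
        ext p; rw [Set.mem_setOf_eq, Set.mem_setOf_eq, hrep a b p.1 p.2, hv, hv]
      rw [hset]
      exact isClosed_le (by continuity) (by continuity)
    · intro x
      refine ⟨v x - v astar + 1, v x - v astar - 1, ⟨?_, ?_⟩, ⟨?_, ?_⟩⟩
      · rw [hrep _ _ _ _, hv, hv]; linarith
      · rw [hrep _ _ _ _, hv, hv]; push_neg; linarith
      · rw [hrep _ _ _ _, hv, hv]; linarith
      · rw [hrep _ _ _ _, hv, hv]; push_neg; linarith
    · intro x y zx zy h α
      rw [hrep _ _ _ _, hv, hv] at h ⊢; linarith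
  · rintro ⟨astar, zstar, hcont, hbetw, hshift⟩
    have hmono' : ∀ w w' : ℝ, R (astar, w) (astar, w') ↔ w ≤ w' := by
      intro w w'
      constructor
      · intro h
        by_contra hlt
        push_neg at hlt
        exact (hmono astar w' w hlt).2 h
      · intro h
        rcases eq_or_lt_of_le h with rfl | h
        · exact hRrefl _
        · exact (hmono astar w w' h).1
    have key : ∀ x : 𝒜, ∃ m : ℝ, R (x, m) (astar, zstar) ∧ R (astar, zstar) (x, m) := by
      intro x
      obtain ⟨zx, zhat, h1, h2⟩ := hbetw x
      set S := {z : ℝ | R (x, z) (astar, zstar)} with hS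
      have hSclosed : IsClosed S := by
        have : IsClosed ((fun z : ℝ => (z, zstar)) ⁻¹'
            {p : ℝ × ℝ | R (x, p.1) (astar, p.2)}) :=
          (hcont x astar).preimage (by continuity)
        simpa [hS, Set.preimage] using this
      have hSne : S.Nonempty := ⟨zhat, h2.1⟩
      have hSbdd : BddAbove S := by
        refine ⟨zx, fun z hz => ?_⟩
        by_contra h
        push_neg at h
        exact h1.2 (hRtrans (hmono x zx z h).1 hz)
      have hmS : sSup S ∈ S := hSclosed.csSup_mem hSne hSbdd
      refine ⟨sSup S, hmS, ?_⟩
      have hT : IsClosed {z : ℝ | R (astar, zstar) (x, z)} := by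
        have : IsClosed ((fun z : ℝ => (zstar, z)) ⁻¹'
            {p : ℝ × ℝ | R (astar, p.1) (x, p.2)}) :=
          (hcont astar x).preimage (by continuity)
        simpa [Set.preimage] using this
      have hsub : Set.Ioi (sSup S) ⊆ {z : ℝ | R (astar, zstar) (x, z)} := by
        intro z hz
        rcases hRtotal (x, z) (astar, zstar) with h | h
        · exact absurd (le_csSup hSbdd h) (not_le.2 hz)
        · exact h
      have hcl := closure_mono hsub
      rw [closure_Ioi, hT.closure_eq] at hcl
      exact hcl (le_refl (sSup S))
    choose v hv using key
    have equiv : ∀ (a : 𝒜) (za : ℝ),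
        R (a, za) (astar, zstar - (v a - za)) ∧ R (astar, zstar - (v a - za)) (a, za) := by
      intro a za
      have e : v a - (v a - za) = za := by ring
      constructor
      · have h := hshift a astar (v a) zstar (hv a).1 (v a - za)
        rwa [e] at h
      · have h := hshift astar a zstar (v a) (hv a).2 (v a - za)
        rwa [e] at h
    refine ⟨fun p => v p.1 - p.2, ⟨v, fun a z => rfl⟩, ?_⟩
    intro a b za zb
    constructor
    · intro h
      have hchain : R (astar, zstar - (v a - za)) (astar, zstar - (v b - zb)) :=
        hRtrans (hRtrans (equiv a za).2 h) (equiv b zb).1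
      have := (hmono' _ _).1 hchain
      simp only
      linarith
    · intro h
      simp only at h
      have : zstar - (v a - za) ≤ zstar - (v b - zb) := by linarith
      exact hRtrans (hRtrans (equiv a za).1 ((hmono' _ _).2 this)) (equiv b zb).2
end

section
/- Let ≽ be a total preorder on 𝒜 × ℝ and suppose there exist a* ∈ 𝒜 and z* ∈ ℝ such that: (1) ≽ is continuous in money, i.e., for all a, b ∈ 𝒜 the set {(z_a, z_b) ∈ ℝ² : (a, z_a) ≽ (b, z_b)} is closed in ℝ²; (2) for every x ∈ 𝒜 there exist z_x, ẑ_x ∈ ℝ with (x, z_x) ≺ (a*, z*) ≺ (x, ẑ_x); (3) for all x, y ∈ 𝒜 and z_x, z_y ∈ ℝ with (x, z_x) ≽ (y, z_y), it holds that (x, z_x − α) ≽ (y, z_y − α) for every α ∈ ℝ. Then ≽ is strictly monotone in money with a direction that is uniform across alternatives: either for every a ∈ 𝒜 and all z < z' one has (a, z) ≻ (a, z'), or for every a ∈ 𝒜 and all z < z' one has (a, z) ≺ (a, z'). -/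
open Set

namespace Real

section ClosedTotalSubmonoid

variable {S : Set ℝ} (hadd : ∀ s ∈ S, ∀ t ∈ S, s + t ∈ S) (htot : ∀ t, t ∈ S ∨ -t ∈ S)
include hadd htot

theorem half_mem_and_neg_half_mem {t : ℝ} (ht : t ∈ S) (hnt : -t ∈ S) :
    t / 2 ∈ S ∧ -(t / 2) ∈ S := by
  rcases htot (t / 2) with h | h
  · refine ⟨h, ?_⟩
    convert hadd _ h _ hnt using 1; ring
  · refine ⟨?_, h⟩
    convert hadd _ h _ ht using 1; ring

theorem eq_univ_of_mem_of_neg_mem (hS : IsClosed S) {t : ℝ} (ht : t ∈ S) (hnt : -t ∈ S)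
    (ht0 : t ≠ 0) : S = univ := by
  let G : AddSubgroup ℝ :=
    { carrier := {t | t ∈ S ∧ -t ∈ S}
      zero_mem' := by simpa using htot 0
      add_mem' := fun ⟨hs, hns⟩ ⟨ht, hnt⟩ =>
        ⟨hadd _ hs _ ht, by simpa [add_comm] using hadd _ hns _ hnt⟩
      neg_mem' := fun ⟨ht, hnt⟩ => ⟨hnt, by simpa using ht⟩ }
  have hG_closed : IsClosed (G : Set ℝ) := hS.inter (hS.preimage continuous_neg)
  have hG_dense : Dense (G : Set ℝ) := by
    refine G.dense_of_no_min (fun hbot => ht0 ?_) ?_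
    · exact (AddSubgroup.mem_bot).1 (hbot ▸ ⟨ht, hnt⟩ : t ∈ (⊥ : AddSubgroup ℝ))
    · rintro ⟨a, ⟨⟨ha, hna⟩, ha0⟩, hmin⟩
      have := hmin ⟨half_mem_and_neg_half_mem hadd htot ha hna, half_pos ha0⟩
      linarith
  refine eq_univ_of_forall fun x => ?_
  have hx : x ∈ (G : Set ℝ) := by rw [← hG_closed.closure_eq, hG_dense.closure_eq]; trivial
  exact hx.1

theorem eq_univ_or_eq_Ici_or_eq_Iic (hS : IsClosed S) : S = univ ∨ S = Ici 0 ∨ S = Iic 0 := by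
  have h0 : (0 : ℝ) ∈ S := by simpa using htot 0
  by_cases hindiff : ∃ t, 0 < t ∧ t ∈ S ∧ -t ∈ S
  · obtain ⟨t, ht0, ht, hnt⟩ := hindiff
    exact Or.inl (eq_univ_of_mem_of_neg_mem hadd htot hS ht hnt ht0.ne')
  push Not at hindiff
  right
  have hdisj : Ioi 0 ∩ (S ∩ Neg.neg ⁻¹' S) = ∅ :=
    eq_empty_of_forall_notMem fun t ⟨ht0, ht, hnt⟩ => hindiff t ht0 ht hnt
  rcases isPreconnected_iff_subset_of_disjoint_closed.1 isPreconnected_Ioi S _ hS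
    (hS.preimage continuous_neg) (fun t _ => htot t) hdisj with hpos | hneg
  · refine Or.inl (Subset.antisymm (fun t ht => mem_Ici.2 ?_) fun t ht => ?_)
    · by_contra! ht0
      exact hindiff (-t) (neg_pos.2 ht0) (hpos (mem_Ioi.2 (neg_pos.2 ht0))) (by simpa using ht)
    · rcases (mem_Ici.1 ht).eq_or_lt with rfl | ht0
      exacts [h0, hpos ht0]
  · refine Or.inr (Subset.antisymm (fun t ht => mem_Iic.2 ?_) fun t ht => ?_)
    · by_contra! ht0
      exact hindiff t ht0 ht (hneg ht0)
    · rcases (mem_Iic.1 ht).eq_or_lt with rfl | ht0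
      exacts [h0, by simpa using hneg (neg_pos.2 ht0)]

end ClosedTotalSubmonoid

end Real

section Preference

variable {𝒜 : Type*}

def ShiftInvariant (R : 𝒜 × ℝ → 𝒜 × ℝ → Prop) : Prop :=
  ∀ (x y : 𝒜) (zx zy : ℝ), R (x, zx) (y, zy) → ∀ α : ℝ, R (x, zx - α) (y, zy - α)

def improvingShifts (R : 𝒜 × ℝ → 𝒜 × ℝ → Prop) (a : 𝒜) : Set ℝ :=
  {t | R (a, t) (a, 0)}

variable {R : 𝒜 × ℝ → 𝒜 × ℝ → Prop}

@[simp]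
theorem mem_improvingShifts {a : 𝒜} {t : ℝ} : t ∈ improvingShifts R a ↔ R (a, t) (a, 0) :=
  Iff.rfl

theorem isClosed_improvingShifts {a : 𝒜} (hcont : IsClosed {p : ℝ × ℝ | R (a, p.1) (a, p.2)}) :
    IsClosed (improvingShifts R a) :=
  hcont.preimage (continuous_id.prodMk continuous_const)

namespace ShiftInvariant

variable (hshift : ShiftInvariant R)
include hshift

theorem rel_add {x y : 𝒜} {zx zy : ℝ} (h : R (x, zx) (y, zy)) (α : ℝ) :
    R (x, zx + α) (y, zy + α) := by
  simpa using hshift x y zx zy h (-α)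

theorem rel_iff_sub_mem {a : 𝒜} {z z' : ℝ} :
    R (a, z) (a, z') ↔ z - z' ∈ improvingShifts R a :=
  ⟨fun h => by simpa using hshift a a z z' h z', fun h => by simpa using hshift.rel_add h z'⟩

theorem add_mem_improvingShifts (htrans : Transitive R) {a : 𝒜} {s t : ℝ}
    (hs : s ∈ improvingShifts R a) (ht : t ∈ improvingShifts R a) : s + t ∈ improvingShifts R a :=
  htrans (by simpa using hshift.rel_add hs t) ht

theorem mem_or_neg_mem_improvingShifts (htot : Total R) (a : 𝒜) (t : ℝ) :
    t ∈ improvingShifts R a ∨ -t ∈ improvingShifts R a :=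
  (htot (a, t) (a, 0)).imp id fun h => by simpa using hshift a a 0 t h t

theorem improvingShifts_subset_of_rel (htrans : Transitive R) {a b : 𝒜} {za zb : ℝ}
    (hab : R (a, za) (b, zb)) (hba : R (b, zb) (a, za)) :
    improvingShifts R a ⊆ improvingShifts R b := fun t ht => by
  have hat : R (a, za + t) (a, za) := hshift.rel_iff_sub_mem.2 (by simpa using ht)
  simpa using hshift.rel_iff_sub_mem.1 (htrans (hshift.rel_add hba t) (htrans hat hab))

end ShiftInvariant

theorem exists_rel_and_rel (htot : Total R)
    (hcont : ∀ a b : 𝒜, IsClosed {p : ℝ × ℝ | R (a, p.1) (b, p.2)}) {a b : 𝒜} {zb z₁ z₂ : ℝ}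
    (hlow : R (b, zb) (a, z₁)) (hhigh : R (a, z₂) (b, zb)) :
    ∃ z, R (a, z) (b, zb) ∧ R (b, zb) (a, z) := by
  obtain ⟨z, -, hz⟩ := isPreconnected_closed_iff.1 isPreconnected_univ
    {z | R (a, z) (b, zb)} {z | R (b, zb) (a, z)}
    ((hcont a b).preimage (continuous_id.prodMk continuous_const))
    ((hcont b a).preimage (continuous_const.prodMk continuous_id))
    (fun z _ => htot _ _) ⟨z₂, trivial, hhigh⟩ ⟨z₁, trivial, hlow⟩
  exact ⟨z, hz⟩

end Preference

theorem stmt16_general {𝒜 : Type*}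
    (R : 𝒜 × ℝ → 𝒜 × ℝ → Prop)
    (hRtrans : Transitive R) (hRtotal : Total R)
    (astar : 𝒜) (zstar : ℝ)
    -- (1) continuity in money
    (hcont : ∀ a b : 𝒜, IsClosed {p : ℝ × ℝ | R (a, p.1) (b, p.2)})
    -- (2) for every alternative, (a*, z*) is strictly in between
    (hbetween : ∀ x : 𝒜, ∃ zx zhat : ℝ,
      StrictPref R (astar, zstar) (x, zx) ∧ StrictPref R (x, zhat) (astar, zstar))
    -- (3) invariance under common shifts of the payments
    (hshift : ∀ (x y : 𝒜) (zx zy : ℝ), R (x, zx) (y, zy) →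
      ∀ α : ℝ, R (x, zx - α) (y, zy - α)) :
    (∀ (a : 𝒜) (z z' : ℝ), z < z' → StrictPref R (a, z) (a, z')) ∨
    (∀ (a : 𝒜) (z z' : ℝ), z < z' → StrictPref R (a, z') (a, z)) := by
  have hsame : ∀ a, improvingShifts R a = improvingShifts R astar := fun a => by
    obtain ⟨_, _, hlow, hhigh⟩ := hbetween a
    obtain ⟨z, h, h'⟩ := exists_rel_and_rel hRtotal hcont hlow.1 hhigh.1
    exact (ShiftInvariant.improvingShifts_subset_of_rel hshift hRtrans h h').antisymm
      (ShiftInvariant.improvingShifts_subset_of_rel hshift hRtrans h' h)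
  have hne : improvingShifts R astar ≠ univ := fun h => by
    obtain ⟨_, _, hlow, -⟩ := hbetween astar
    exact hlow.2 (ShiftInvariant.rel_iff_sub_mem hshift |>.2 (h ▸ mem_univ _))
  have hstrict : ∀ a z z', StrictPref R (a, z) (a, z') ↔
      z - z' ∈ improvingShifts R astar ∧ z' - z ∉ improvingShifts R astar := fun a z z' => by
    simp only [StrictPref, ShiftInvariant.rel_iff_sub_mem hshift, hsame]
  rcases Real.eq_univ_or_eq_Ici_or_eq_Iic
      (fun s hs t ht => ShiftInvariant.add_mem_improvingShifts hshift hRtrans hs ht)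
      (ShiftInvariant.mem_or_neg_mem_improvingShifts hshift hRtotal astar)
      (isClosed_improvingShifts (hcont astar astar)) with h | h | h
  · exact absurd h hne
  · refine Or.inr fun a z z' hz => (hstrict a z' z).2 ?_
    simp only [h, mem_Ici]
    constructor <;> linarith
  · refine Or.inl fun a z z' hz => (hstrict a z z').2 ?_
    simp only [h, mem_Iic]
    constructor <;> linarith

theorem stmt16 {𝒜 : Type*} [Fintype 𝒜] [Nonempty 𝒜]
    (R : 𝒜 × ℝ → 𝒜 × ℝ → Prop)
    (hRrefl : Reflexive R) (hRtrans : Transitive R) (hRtotal : Total R)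
    (astar : 𝒜) (zstar : ℝ)
    -- (1) continuity in money
    (hcont : ∀ a b : 𝒜, IsClosed {p : ℝ × ℝ | R (a, p.1) (b, p.2)})
    -- (2) for every alternative, (a*, z*) is strictly in between
    (hbetween : ∀ x : 𝒜, ∃ zx zhat : ℝ,
      StrictPref R (astar, zstar) (x, zx) ∧ StrictPref R (x, zhat) (astar, zstar))
    -- (3) invariance under common shifts of the payments
    (hshift : ∀ (x y : 𝒜) (zx zy : ℝ), R (x, zx) (y, zy) →
      ∀ α : ℝ, R (x, zx - α) (y, zy - α)) :
    (∀ (a : 𝒜) (z z' : ℝ), z < z' → StrictPref R (a, z) (a, z')) ∨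
    (∀ (a : 𝒜) (z z' : ℝ), z < z' → StrictPref R (a, z') (a, z)) :=
  stmt16_general R hRtrans hRtotal astar zstar hcont hbetween hshift
end

section
/- There exist a finite set of alternatives 𝒜 (one may take |𝒜| = 3), a total preorder ≽ on 𝒜 × ℝ, a quasi-linear utility function u : 𝒜 × ℝ → ℝ, and a constant C > 0 such that u pos-represents ≽ but the quasi-linear utility function u + C (defined by (u+C)(a, z) = u(a, z) + C) does not pos-represent ≽. In particular, for pos-representation, two quasi-linear utility functions differing by a constant need not pos-represent the same preferences. -/
/-- Two quasi-linear utility functions differing by a constant need not pos-represent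
the same preferences (taking `𝒜 = Fin 3`). -/
theorem stmt18 :
    ∃ (R : Fin 3 × ℝ → Fin 3 × ℝ → Prop) (u : Fin 3 × ℝ → ℝ) (C : ℝ),
      Reflexive R ∧ Transitive R ∧ Total R ∧
      QuasiLinear u ∧ 0 < C ∧
      PosRepresents u R ∧ ¬ PosRepresents (fun p => u p + C) R := by
  refine ⟨fun p q => max (-q.2) (-1) ≤ max (-p.2) (-1), fun p => -p.2, 2,
    fun p => le_refl _, fun p q r h1 h2 => le_trans h2 h1, fun p q => le_total _ _,
    ⟨fun _ => 0, fun a z => by ring⟩, by norm_num, ?_, ?_⟩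
  · intro a b za zb h
    simp only at h ⊢
    constructor
    · intro hR
      rcases h with h | h <;>
        rcases le_total (-za) (-1) with h1 | h1 <;>
        rcases le_total (-zb) (-1) with h2 | h2 <;>
        simp [max_eq_left, max_eq_right, h1, h2] at hR <;> linarith
    · intro hle
      rcases le_total (-za) (-1) with h1 | h1 <;>
        rcases le_total (-zb) (-1) with h2 | h2 <;>
        simp [max_eq_left, max_eq_right, h1, h2] <;> linarith
  · intro hP
    have := (hP 0 0 (3/2) 1 (Or.inl (by norm_num))).mp (by norm_num)
    norm_num at this
end

section
/- There exist a finite set of alternatives 𝒜 (one may take |𝒜| = 3), a utility function u : 𝒜 × ℝ → ℝ with z ↦ u(a, z) continuous and strictly decreasing for each a ∈ 𝒜, and a quasi-linear utility function u^QL : 𝒜 × ℝ → ℝ, such that u(a, z) = u^QL(a, z) whenever u^QL(a, z) ≥ 0 (so that u^QL pos-represents the preference induced by u), yet u is not a parallel utility function. -/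
/-- `min_{a' ∈ 𝒜} u (a', 0)`. -/
noncomputable def minAtZero {𝒜 : Type*} [Fintype 𝒜] [Nonempty 𝒜] (u : 𝒜 × ℝ → ℝ) : ℝ :=
  Finset.univ.inf' Finset.univ_nonempty (fun a => u (a, 0))

/-- Parallel utility functions (Ma et al.). -/
def Parallel {𝒜 : Type*} [Fintype 𝒜] [Nonempty 𝒜] (u : 𝒜 × ℝ → ℝ) : Prop :=
  (∀ a : 𝒜, Continuous fun z => u (a, z)) ∧
  (∀ a : 𝒜, StrictAnti fun z => u (a, z)) ∧
  (∀ a : 𝒜, ∃ L : EReal, Filter.Tendsto (fun z => ((u (a, z) : ℝ) : EReal))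
      Filter.atTop (nhds L) ∧ L < ((minAtZero u : ℝ) : EReal)) ∧
  (∀ a b : 𝒜, u (b, 0) ≤ u (a, 0) →
    ∀ ta tb : ℝ, u (a, ta) = minAtZero u → u (b, tb) = minAtZero u →
      ∀ z : ℝ, 0 ≤ z → minAtZero u ≤ u (b, z) → u (a, z + (ta - tb)) = u (b, z))

/-!
A quasi-linear utility pos-represents every preference whose utility agrees with it where it is
nonnegative and is negative elsewhere, so below zero the utility may be bent at will. Take
values `v = (-1, 2, 1)` and bend the third alternative to slope `1/2` below zero. The reference
level is `min_a u (a, 0) = -1`, and alternatives `1` and `2` both have willingness-to-pay `3`,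
yet at payment `2` their utilities are `0` and `-1/2`: the curves are not parallel translates.
-/

section General

variable {𝒜 : Type*}

theorem posRepresents_of_eq_of_nonneg_of_neg {u w : 𝒜 × ℝ → ℝ}
    (heq : ∀ p, 0 ≤ w p → u p = w p) (hneg : ∀ p, w p < 0 → u p < 0) :
    PosRepresents w (fun p q => u q ≤ u p) := by
  intro a b za zb h
  show u (b, zb) ≤ u (a, za) ↔ _
  rcases le_or_gt 0 (w (a, za)) with ha | ha <;> rcases le_or_gt 0 (w (b, zb)) with hb | hb
  · rw [heq _ ha, heq _ hb]
  · rw [heq _ ha]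
    have := hneg _ hb
    constructor <;> intro <;> linarith
  · rw [heq _ hb]
    have := hneg _ ha
    constructor <;> intro <;> linarith
  · rcases h with h | h <;> linarith

theorem minAtZero_eq_of_forall_le [Fintype 𝒜] [Nonempty 𝒜] {u : 𝒜 × ℝ → ℝ} {m : ℝ} {a₀ : 𝒜}
    (h₀ : u (a₀, 0) = m) (hle : ∀ a, m ≤ u (a, 0)) : minAtZero u = m :=
  le_antisymm (h₀ ▸ Finset.inf'_le _ (Finset.mem_univ a₀)) (Finset.le_inf' _ _ fun a _ => hle a)

def quasiLinearUtility (v : 𝒜 → ℝ) : 𝒜 × ℝ → ℝ := fun p => v p.1 - p.2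

theorem quasiLinear_quasiLinearUtility (v : 𝒜 → ℝ) : QuasiLinear (quasiLinearUtility v) :=
  ⟨v, fun _ _ => rfl⟩

/-- For `0 < c a ≤ 1`, the `max` is the quasi-linear utility where that is nonnegative and its
`c a`-multiple where it is negative. -/
noncomputable def kinkedUtility (v c : 𝒜 → ℝ) : 𝒜 × ℝ → ℝ :=
  fun p => max (quasiLinearUtility v p) (c p.1 * quasiLinearUtility v p)

variable {v c : 𝒜 → ℝ}

theorem kinkedUtility_eq_of_nonneg (hc : ∀ a, c a ≤ 1) {p : 𝒜 × ℝ}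
    (hp : 0 ≤ quasiLinearUtility v p) : kinkedUtility v c p = quasiLinearUtility v p :=
  max_eq_left (mul_le_of_le_one_left hp (hc p.1))

theorem kinkedUtility_eq_of_neg (hc : ∀ a, c a ≤ 1) {p : 𝒜 × ℝ}
    (hp : quasiLinearUtility v p < 0) :
    kinkedUtility v c p = c p.1 * quasiLinearUtility v p :=
  max_eq_right (by nlinarith [hc p.1])

theorem kinkedUtility_neg_of_neg (hc : ∀ a, 0 < c a) {p : 𝒜 × ℝ}
    (hp : quasiLinearUtility v p < 0) : kinkedUtility v c p < 0 :=
  max_lt hp (mul_neg_of_pos_of_neg (hc p.1) hp)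

theorem continuous_kinkedUtility (a : 𝒜) : Continuous fun z => kinkedUtility v c (a, z) := by
  unfold kinkedUtility quasiLinearUtility
  fun_prop

theorem strictAnti_kinkedUtility (hc : ∀ a, 0 < c a) (a : 𝒜) :
    StrictAnti fun z => kinkedUtility v c (a, z) := fun _ _ hxy =>
  max_lt_max (sub_lt_sub_left hxy _) (mul_lt_mul_of_pos_left (sub_lt_sub_left hxy _) (hc a))

end General

noncomputable def exampleValues : Fin 3 → ℝ := ![-1, 2, 1]

noncomputable def exampleSlopes : Fin 3 → ℝ := ![1, 1, 1 / 2]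

noncomputable def exampleUtility : Fin 3 × ℝ → ℝ := kinkedUtility exampleValues exampleSlopes

theorem exampleSlopes_pos (a : Fin 3) : 0 < exampleSlopes a := by
  fin_cases a <;> norm_num [exampleSlopes]

theorem exampleSlopes_le_one (a : Fin 3) : exampleSlopes a ≤ 1 := by
  fin_cases a <;> norm_num [exampleSlopes]

theorem exampleUtility_zero (z : ℝ) : exampleUtility (0, z) = -1 - z := by
  simp [exampleUtility, kinkedUtility, quasiLinearUtility, exampleSlopes, exampleValues]

theorem exampleUtility_one (z : ℝ) : exampleUtility (1, z) = 2 - z := by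
  simp [exampleUtility, kinkedUtility, quasiLinearUtility, exampleSlopes, exampleValues]

theorem quasiLinearUtility_exampleValues_two (z : ℝ) :
    quasiLinearUtility exampleValues (2, z) = 1 - z := by
  simp [quasiLinearUtility, exampleValues]

theorem exampleUtility_two_of_le {z : ℝ} (hz : z ≤ 1) : exampleUtility (2, z) = 1 - z := by
  rw [exampleUtility, kinkedUtility_eq_of_nonneg exampleSlopes_le_one
    (by rw [quasiLinearUtility_exampleValues_two]; linarith), quasiLinearUtility_exampleValues_two]

theorem exampleUtility_two_of_lt {z : ℝ} (hz : 1 < z) : exampleUtility (2, z) = (1 - z) / 2 := by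
  rw [exampleUtility, kinkedUtility_eq_of_neg exampleSlopes_le_one
    (by rw [quasiLinearUtility_exampleValues_two]; linarith), quasiLinearUtility_exampleValues_two]
  simp only [exampleSlopes, Matrix.cons_val]
  ring

theorem minAtZero_exampleUtility : minAtZero exampleUtility = -1 := by
  refine minAtZero_eq_of_forall_le (a₀ := 0) (by simp [exampleUtility_zero]) fun
    | 0 => by simp [exampleUtility_zero]
    | 1 => by norm_num [exampleUtility_one]
    | 2 => by norm_num [exampleUtility_two_of_le]

theorem not_parallel_exampleUtility : ¬ Parallel exampleUtility := by
  rintro ⟨-, -, -, hparallel⟩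
  have hmin := minAtZero_exampleUtility
  have hwtp₁ : exampleUtility (1, 3) = minAtZero exampleUtility := by
    rw [hmin, exampleUtility_one]; norm_num
  have hwtp₂ : exampleUtility (2, 3) = minAtZero exampleUtility := by
    rw [hmin, exampleUtility_two_of_lt] <;> norm_num
  have hle : exampleUtility (2, 0) ≤ exampleUtility (1, 0) := by
    rw [exampleUtility_one, exampleUtility_two_of_le zero_le_one]; norm_num
  have hz : minAtZero exampleUtility ≤ exampleUtility (2, 2) := by
    rw [hmin, exampleUtility_two_of_lt] <;> norm_num
  have := hparallel 1 2 hle 3 3 hwtp₁ hwtp₂ 2 zero_le_two hz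
  rw [exampleUtility_one, exampleUtility_two_of_lt one_lt_two] at this
  norm_num at this

/-- There is a (continuous, strictly decreasing in the payment) utility function on
three alternatives which coincides with a quasi-linear utility function wherever the
latter is nonnegative — so that the quasi-linear function pos-represents the induced
preference — yet it is not a parallel utility function. -/
theorem stmt19 :
    ∃ (u uQL : Fin 3 × ℝ → ℝ),
      (∀ a : Fin 3, Continuous fun z => u (a, z)) ∧
      (∀ a : Fin 3, StrictAnti fun z => u (a, z)) ∧
      QuasiLinear uQL ∧
      (∀ (a : Fin 3) (z : ℝ), 0 ≤ uQL (a, z) → u (a, z) = uQL (a, z)) ∧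
      PosRepresents uQL (fun p q => u q ≤ u p) ∧
      ¬ Parallel u :=
  ⟨exampleUtility, quasiLinearUtility exampleValues, continuous_kinkedUtility,
    strictAnti_kinkedUtility exampleSlopes_pos, quasiLinear_quasiLinearUtility _,
    fun _ _ => kinkedUtility_eq_of_nonneg exampleSlopes_le_one,
    posRepresents_of_eq_of_nonneg_of_neg (fun _ => kinkedUtility_eq_of_nonneg exampleSlopes_le_one)
      (fun _ => kinkedUtility_neg_of_neg exampleSlopes_pos),
    not_parallel_exampleUtility⟩
end
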